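/- Let A be a finite subset of ZMod d × ZMod d, let ρ be a density matrix on ℂ^d, and let j ∈ ZMod d × ZMod d. Then for every 1 ≤ ℓ ≤ d², the minimum over all ℓ-element subsets S of ZMod d × ZMod d of ∑_{i∈S} Tr(D(j)·ρ·D(j)† · Π(A + i)) equals the minimum over all ℓ-element subsets S of ∑_{i∈S} Tr(ρ · Π(A + i)). Hence a quantum state ρ and its displacement D(j)·ρ·D(j)† have the same Lorenz values and the same Gini index. -/

import Mathlib

open scoped Matrix ComplexOrder

noncomputable section

/-- `ω(r) = exp(2πi r / d)` for `r ∈ ZMod d`. -/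
def omg (d : ℕ) (r : ZMod d) : ℂ := Complex.exp (2 * Real.pi * Complex.I * r.val / d)

/-- The matrix `Z` with `Z|m⟩ = ω(m)|m⟩`. -/
def Zmat (d : ℕ) [Fact d.Prime] : Matrix (ZMod d) (ZMod d) ℂ :=
  Matrix.diagonal fun m => omg d m

/-- The matrix `X` with `X|m⟩ = |m+1⟩`. -/
def Xmat (d : ℕ) [Fact d.Prime] : Matrix (ZMod d) (ZMod d) ℂ :=
  Matrix.of fun m n => if m = n + 1 then 1 else 0

/-- The displacement operator `D(α,β) = ω(-2⁻¹αβ) Z^α X^β` as a matrix. -/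
def Dmat (d : ℕ) [Fact d.Prime] (i : ZMod d × ZMod d) : Matrix (ZMod d) (ZMod d) ℂ :=
  omg d (-(2⁻¹ * i.1 * i.2)) • (Zmat d ^ (i.1).val * Xmat d ^ (i.2).val)

/-- The displacement operator `D(i)` as a linear endomorphism of `ℂ^d`. -/
def Dlin (d : ℕ) [Fact d.Prime] (i : ZMod d × ZMod d) :
    EuclideanSpace ℂ (ZMod d) →ₗ[ℂ] EuclideanSpace ℂ (ZMod d) :=
  Matrix.toEuclideanLin (Dmat d i)

/-- The coherent subspace `H(A)`: the span of the coherent states `D(j)s`, `j ∈ A`. -/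
def Hsub (d : ℕ) [Fact d.Prime] (s : EuclideanSpace ℂ (ZMod d))
    (A : Finset (ZMod d × ZMod d)) : Submodule ℂ (EuclideanSpace ℂ (ZMod d)) :=
  Submodule.span ℂ ((fun j => Dlin d j s) '' ↑A)

/-- The coherent projector `Π(A)`: the orthogonal projection of `ℂ^d` onto `H(A)`,
as a linear endomorphism of `ℂ^d`. -/
def Proj (d : ℕ) [Fact d.Prime] (s : EuclideanSpace ℂ (ZMod d))
    (A : Finset (ZMod d × ZMod d)) :
    EuclideanSpace ℂ (ZMod d) →ₗ[ℂ] EuclideanSpace ℂ (ZMod d) :=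
  (Hsub d s A).subtype ∘ₗ (Submodule.orthogonalProjectionOnto (Hsub d s A)).toLinearMap

/-- The coherent projector `Π(A)` as a `d × d` matrix. -/
def PmatM (d : ℕ) [Fact d.Prime] (s : EuclideanSpace ℂ (ZMod d))
    (A : Finset (ZMod d × ZMod d)) : Matrix (ZMod d) (ZMod d) ℂ :=
  Matrix.toEuclideanLin.symm (Proj d s A)

/-- The `Q` function of a matrix `ρ`: `Q(A + i; ρ) = Tr(ρ · Π(A + i))` (a real number). -/
def trQ (d : ℕ) [Fact d.Prime] (s : EuclideanSpace ℂ (ZMod d))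
    (A : Finset (ZMod d × ZMod d)) (ρ : Matrix (ZMod d) (ZMod d) ℂ)
    (i : ZMod d × ZMod d) : ℝ :=
  ((ρ * PmatM d s (A.image (· + i))).trace).re

/-- The unnormalized Lorenz value `Λ(ℓ; ρ)`: the minimum, over all `ℓ`-element subsets `S`
of `ZMod d × ZMod d`, of `∑_{i ∈ S} Tr(ρ · Π(A + i))`. -/
def LorMin (d : ℕ) [Fact d.Prime] (s : EuclideanSpace ℂ (ZMod d))
    (A : Finset (ZMod d × ZMod d)) (ρ : Matrix (ZMod d) (ZMod d) ℂ) (ℓ : ℕ) : ℝ :=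
  sInf {x : ℝ | ∃ S : Finset (ZMod d × ZMod d), S.card = ℓ ∧ x = ∑ i ∈ S, trQ d s A ρ i}

/-- The Gini index `G(τ) = 1 − (2/(d²+1)) · ∑_{ℓ=1}^{d²} L(ℓ; τ)`, where
`L(ℓ; τ) = Λ(ℓ; τ)/(d · card A)` is the Lorenz value. -/
def Gini (d : ℕ) [Fact d.Prime] (s : EuclideanSpace ℂ (ZMod d))
    (A : Finset (ZMod d × ZMod d)) (τ : Matrix (ZMod d) (ZMod d) ℂ) : ℝ :=
  1 - (2 / ((d : ℝ) ^ 2 + 1)) *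
    ∑ ℓ ∈ Finset.Icc 1 (d ^ 2), LorMin d s A τ ℓ / (d * A.card)


section Helpers

variable {d : ℕ} [Fact d.Prime]

lemma omg_intCast (k : ℤ) : omg d (k : ZMod d) = Complex.exp (2 * Real.pi * Complex.I * k / d) := by
  have hd : (d : ℂ) ≠ 0 := Nat.cast_ne_zero.mpr (Fact.out (p := d.Prime)).pos.ne'
  set r : ZMod d := (k : ZMod d) with hr
  have hcast : ((r.val : ℤ) : ZMod d) = (k : ZMod d) := by
    simp [ZMod.natCast_val, ZMod.cast_id]
    exact hr
  obtain ⟨m, hm⟩ : (d : ℤ) ∣ (k - r.val) := by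
    rw [← ZMod.intCast_zmod_eq_zero_iff_dvd, Int.cast_sub, sub_eq_zero]
    exact hcast.symm
  have hk : (k : ℂ) = (r.val : ℂ) + d * m := by
    have h2 : (k : ℤ) = r.val + d * m := by linarith [hm]
    exact_mod_cast congrArg (Int.cast : ℤ → ℂ) h2
  rw [omg, hk]
  have : 2 * ↑Real.pi * Complex.I * (↑r.val + ↑d * ↑m) / ↑d
      = 2 * ↑Real.pi * Complex.I * ↑r.val / ↑d + ↑m * (2 * ↑Real.pi * Complex.I) := by
    field_simp
  rw [this, Complex.exp_add, Complex.exp_int_mul_two_pi_mul_I, mul_one]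

lemma omg_eq_intCast (r : ZMod d) : omg d r = omg d ((r.val : ℤ) : ZMod d) := by
  congr 1
  simp [ZMod.natCast_val, ZMod.cast_id]

lemma omg_zero' : omg d 0 = 1 := by
  simp [omg]

lemma omg_add' (r t : ZMod d) : omg d (r + t) = omg d r * omg d t := by
  have h : (r + t : ZMod d) = (((r.val : ℤ) + (t.val : ℤ) : ℤ) : ZMod d) := by
    simp [ZMod.natCast_val, ZMod.cast_id]
  rw [omg_eq_intCast r, omg_eq_intCast t, h, omg_intCast, omg_intCast, omg_intCast,
    ← Complex.exp_add]
  congr 1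
  push_cast
  ring

lemma omg_ne_zero (r : ZMod d) : omg d r ≠ 0 := Complex.exp_ne_zero _

lemma omg_neg' (r : ZMod d) : omg d (-r) = (omg d r)⁻¹ := by
  have h : omg d r * omg d (-r) = 1 := by rw [← omg_add', add_neg_cancel, omg_zero']
  field_simp [omg_ne_zero r] at h ⊢
  linear_combination h

lemma omg_conj' (r : ZMod d) : star (omg d r) = omg d (-r) := by
  rw [RCLike.star_def, omg_neg', omg, ← Complex.exp_conj, ← Complex.exp_neg]
  congr 1
  have h : (2 * ↑Real.pi * Complex.I * ↑r.val / ↑d)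
      = ((2 * Real.pi * r.val / d : ℝ) : ℂ) * Complex.I := by
    push_cast; ring
  rw [h, map_mul, Complex.conj_I, Complex.conj_ofReal]
  ring

lemma omg_pow' (r : ZMod d) (n : ℕ) : omg d r ^ n = omg d ((n : ZMod d) * r) := by
  induction n with
  | zero => simp [omg_zero']
  | succ k ih =>
    rw [pow_succ, ih, ← omg_add']
    congr 1
    push_cast
    ring

lemma Zpow_eq (a : ℕ) : (Zmat d) ^ a = Matrix.diagonal fun m => omg d ((a : ZMod d) * m) := by
  have h : ((fun m => omg d m) ^ a) = fun m => omg d ((a : ZMod d) * m) := by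
    funext m
    rw [Pi.pow_apply, omg_pow']
  rw [Zmat, Matrix.diagonal_pow, h]

lemma Xpow_eq (b : ℕ) : (Xmat d) ^ b = Matrix.of fun m n => if m = n + (b : ZMod d) then 1 else 0 := by
  induction b with
  | zero =>
    ext m n
    simp [Matrix.one_apply, eq_comm]
  | succ k ih =>
    rw [pow_succ, ih]
    ext m n
    rw [Matrix.mul_apply]
    rw [Finset.sum_eq_single (n + 1)]
    · simp only [Matrix.of_apply, Xmat]
      push_cast
      rw [show n + 1 + (k : ZMod d) = n + ((k : ZMod d) + 1) by ring]
      split <;> simp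
    · intro c _ hc
      simp only [Matrix.of_apply, Xmat]
      rw [if_neg (fun h => hc h)]
      simp
    · intro h
      exact absurd (Finset.mem_univ _) h

lemma Dmat_apply (i : ZMod d × ZMod d) (m n : ZMod d) :
    Dmat d i m n = if m = n + i.2 then omg d (-(2⁻¹ * i.1 * i.2) + i.1 * m) else 0 := by
  rw [Dmat, Matrix.smul_apply, Matrix.mul_apply]
  rw [Zpow_eq, Xpow_eq]
  rw [Finset.sum_eq_single m]
  · simp only [Matrix.diagonal_apply_eq, Matrix.of_apply]
    rw [ZMod.natCast_val, ZMod.cast_id, ZMod.natCast_val, ZMod.cast_id]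
    split
    · rw [smul_eq_mul, mul_one, ← omg_add']
    · simp
  · intro c _ hc
    rw [Matrix.diagonal_apply_ne _ (Ne.symm hc), zero_mul]
  · intro h
    exact absurd (Finset.mem_univ _) h

lemma two_mul_inv_two (hodd : Odd d) : (2 : ZMod d) * 2⁻¹ = 1 := by
  have hp : d.Prime := Fact.out
  have h2 : (2 : ZMod d) ≠ 0 := by
    intro h
    have hdvd : d ∣ 2 := by
      have := (ZMod.natCast_eq_zero_iff 2 d).mp (by exact_mod_cast h)
      exact this
    have hd2 : d = 2 := (Nat.prime_dvd_prime_iff_eq hp Nat.prime_two).mp hdvd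
    rw [hd2] at hodd
    simp [Nat.odd_iff] at hodd
  exact mul_inv_cancel₀ h2

lemma Dmat_mul (hodd : Odd d) (i j : ZMod d × ZMod d) :
    Dmat d j * Dmat d i = omg d (2⁻¹ * (j.1 * i.2 - i.1 * j.2)) • Dmat d (i + j) := by
  have h2 : (2 : ZMod d) * 2⁻¹ = 1 := two_mul_inv_two hodd
  ext m n
  rw [Matrix.mul_apply, Matrix.smul_apply]
  rw [Finset.sum_eq_single (n + i.2)]
  · rw [Dmat_apply, Dmat_apply, Dmat_apply]
    by_cases hm : m = n + i.2 + j.2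
    · rw [if_pos hm, if_pos rfl,
        if_pos (show m = n + (i + j).2 by rw [Prod.snd_add, hm, add_assoc])]
      rw [smul_eq_mul, ← omg_add', ← omg_add']
      congr 1
      subst hm
      simp only [Prod.fst_add, Prod.snd_add]
      linear_combination ((i.1 * j.2) : ZMod d) * h2
    · rw [if_neg hm,
        if_neg (show ¬ m = n + (i + j).2 by
          intro h; exact hm (by rw [h, Prod.snd_add, ← add_assoc])),
        zero_mul, smul_zero]
  · intro c _ hc
    rw [Dmat_apply, Dmat_apply]
    rw [if_neg (fun h => hc h), mul_zero]
  · intro h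
    exact absurd (Finset.mem_univ _) h

lemma Dmat_conjTranspose (hodd : Odd d) (j : ZMod d × ZMod d) :
    (Dmat d j)ᴴ = Dmat d (-j) := by
  have h2 : (2 : ZMod d) * 2⁻¹ = 1 := two_mul_inv_two hodd
  ext m n
  rw [Matrix.conjTranspose_apply, Dmat_apply, Dmat_apply]
  by_cases hm : n = m + j.2
  · rw [if_pos hm, if_pos (show m = n + (-j).2 by rw [Prod.snd_neg, hm]; ring)]
    rw [omg_conj']
    congr 1
    subst hm
    simp only [Prod.fst_neg, Prod.snd_neg]
    linear_combination (j.1 * j.2 : ZMod d) * h2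
  · rw [if_neg hm,
      if_neg (show ¬ m = n + (-j).2 by
        intro h; apply hm; rw [Prod.snd_neg] at h; rw [h]; ring),
      star_zero]

lemma Dmat_zero : Dmat d 0 = 1 := by
  ext m n
  rw [Dmat_apply, Matrix.one_apply]
  simp [omg_zero', eq_comm]

lemma Dmat_mul_conjTranspose_self (hodd : Odd d) (j : ZMod d × ZMod d) :
    Dmat d j * (Dmat d j)ᴴ = 1 := by
  rw [Dmat_conjTranspose hodd, Dmat_mul hodd]
  have h : (-j + j) = (0 : ZMod d × ZMod d) := by ring
  rw [h, Dmat_zero]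
  have harg : (2⁻¹ * (j.1 * (-j).2 - (-j).1 * j.2) : ZMod d) = 0 := by
    simp only [Prod.fst_neg, Prod.snd_neg]
    ring
  rw [harg, omg_zero', one_smul]

lemma Dmat_conjTranspose_mul_self (hodd : Odd d) (j : ZMod d × ZMod d) :
    (Dmat d j)ᴴ * Dmat d j = 1 := by
  rw [Dmat_conjTranspose hodd, Dmat_mul hodd]
  have h : (j + -j) = (0 : ZMod d × ZMod d) := by ring
  rw [h, Dmat_zero]
  have harg : (2⁻¹ * ((-j).1 * j.2 - j.1 * (-j).2) : ZMod d) = 0 := by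
    simp only [Prod.fst_neg, Prod.snd_neg]
    ring
  rw [harg, omg_zero', one_smul]

lemma toEuclideanLin_mul (M N : Matrix (ZMod d) (ZMod d) ℂ) :
    Matrix.toEuclideanLin (M * N) = (Matrix.toEuclideanLin M) ∘ₗ (Matrix.toEuclideanLin N) := by
  apply LinearMap.ext
  intro v
  simp [Matrix.toEuclideanLin_apply, Matrix.mulVec_mulVec]

lemma toEuclideanLin_one : Matrix.toEuclideanLin (1 : Matrix (ZMod d) (ZMod d) ℂ) = LinearMap.id := by
  apply LinearMap.ext
  intro v
  simp [Matrix.toEuclideanLin_apply]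

lemma Dlin_comp (hodd : Odd d) (b j : ZMod d × ZMod d) (v : EuclideanSpace ℂ (ZMod d)) :
    Dlin d j (Dlin d b v) = omg d (2⁻¹ * (j.1 * b.2 - b.1 * j.2)) • Dlin d (b + j) v := by
  have h := congrArg (fun M => Matrix.toEuclideanLin M v) (Dmat_mul hodd b j)
  simpa [Dlin, toEuclideanLin_mul, LinearMap.smul_apply] using h


lemma Hsub_translate (hodd : Odd d) (s : EuclideanSpace ℂ (ZMod d))
    (B : Finset (ZMod d × ZMod d)) (j : ZMod d × ZMod d) :
    Hsub d s (B.image (· + j)) = (Hsub d s B).map (Dlin d j) := by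
  rw [Hsub, Hsub, Submodule.map_span]
  apply le_antisymm
  · rw [Submodule.span_le]
    rintro x ⟨k, hk, rfl⟩
    rw [Finset.coe_image] at hk
    obtain ⟨b, hb, rfl⟩ := hk
    have hco := Dlin_comp hodd b j s
    have hmem : Dlin d j (Dlin d b s) ∈
        Submodule.span ℂ ((Dlin d j) '' ((fun k => Dlin d k s) '' ↑B)) :=
      Submodule.subset_span ⟨Dlin d b s, ⟨b, hb, rfl⟩, rfl⟩
    have hmem2 : Dlin d (b + j) s ∈
        Submodule.span ℂ ((Dlin d j) '' ((fun k => Dlin d k s) '' ↑B)) := by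
      have heq : Dlin d (b + j) s
          = (omg d (2⁻¹ * (j.1 * b.2 - b.1 * j.2)))⁻¹ • (Dlin d j (Dlin d b s)) := by
        rw [hco, smul_smul, inv_mul_cancel₀ (omg_ne_zero _), one_smul]
      rw [heq]
      exact Submodule.smul_mem _ _ hmem
    exact hmem2
  · rw [Submodule.span_le]
    rintro x ⟨y, ⟨b, hb, rfl⟩, rfl⟩
    have hmem2 : Dlin d j (Dlin d b s) ∈
        Submodule.span ℂ ((fun k => Dlin d k s) '' ↑(B.image (· + j))) := by
      rw [Dlin_comp hodd b j s]
      apply Submodule.smul_mem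
      apply Submodule.subset_span
      refine ⟨b + j, ?_, rfl⟩
      rw [Finset.coe_image]
      exact ⟨b, hb, rfl⟩
    exact hmem2

lemma Proj_translate (hodd : Odd d) (s : EuclideanSpace ℂ (ZMod d))
    (B : Finset (ZMod d × ZMod d)) (j : ZMod d × ZMod d) :
    Proj d s (B.image (· + j)) =
      Dlin d j ∘ₗ Proj d s B ∘ₗ Matrix.toEuclideanLin (Dmat d j)ᴴ := by
  have hUU : ∀ x : EuclideanSpace ℂ (ZMod d),
      Matrix.toEuclideanLin (Dmat d j)ᴴ (Dlin d j x) = x := by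
    intro x
    have h := congrArg (fun M => Matrix.toEuclideanLin M x) (Dmat_conjTranspose_mul_self hodd j)
    simpa [toEuclideanLin_mul, toEuclideanLin_one, Dlin] using h
  apply LinearMap.ext
  intro v
  simp only [Proj, LinearMap.coe_comp, Function.comp_apply,
    ContinuousLinearMap.coe_coe, Submodule.coe_subtype]
  apply Submodule.eq_starProjection_of_mem_of_inner_eq_zero (𝕜 := ℂ)
  · rw [Hsub_translate hodd s B j]
    exact Submodule.mem_map_of_mem (Submodule.coe_mem _)
  · intro w hw
    rw [Hsub_translate hodd s B j] at hw
    obtain ⟨k, hk, rfl⟩ := hw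
    have h0 : inner ℂ ((Matrix.toEuclideanLin (Dmat d j)ᴴ)
        (v - Dlin d j ↑((Submodule.orthogonalProjectionOnto (Hsub d s B))
          ((Matrix.toEuclideanLin (Dmat d j)ᴴ) v)))) k = (0 : ℂ) := by
      rw [map_sub, hUU]
      exact Submodule.starProjection_inner_eq_zero _ k hk
    rw [show (Dlin d j k) = (Matrix.toEuclideanLin (Dmat d j)) k from rfl,
      ← LinearMap.adjoint_inner_left, ← Matrix.toEuclideanLin_conjTranspose_eq_adjoint]
    exact h0

lemma PmatM_translate (hodd : Odd d) (s : EuclideanSpace ℂ (ZMod d))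
    (B : Finset (ZMod d × ZMod d)) (j : ZMod d × ZMod d) :
    PmatM d s (B.image (· + j)) = Dmat d j * PmatM d s B * (Dmat d j)ᴴ := by
  apply Matrix.toEuclideanLin.injective
  rw [PmatM, LinearEquiv.apply_symm_apply, Proj_translate hodd s B j,
    toEuclideanLin_mul, toEuclideanLin_mul,
    show Matrix.toEuclideanLin (PmatM d s B) = Proj d s B from
      LinearEquiv.apply_symm_apply _ _,
    LinearMap.comp_assoc]
  rfl

lemma trQ_displaced (hodd : Odd d) (s : EuclideanSpace ℂ (ZMod d))
    (A : Finset (ZMod d × ZMod d)) (ρ : Matrix (ZMod d) (ZMod d) ℂ)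
    (j i : ZMod d × ZMod d) :
    trQ d s A (Dmat d j * ρ * (Dmat d j)ᴴ) i = trQ d s A ρ (i - j) := by
  have himg : A.image (· + i) = (A.image (· + (i - j))).image (· + j) := by
    rw [Finset.image_image]
    congr 1
    funext x
    simp only [Function.comp_apply]
    ring
  rw [trQ, trQ, himg, PmatM_translate hodd s (A.image (· + (i - j))) j]
  set D := Dmat d j
  set P := PmatM d s (A.image (· + (i - j)))
  have h1 : Dᴴ * D = 1 := Dmat_conjTranspose_mul_self hodd j
  have hmat : D * ρ * Dᴴ * (D * P * Dᴴ) = D * (ρ * P) * Dᴴ := by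
    simp only [Matrix.mul_assoc]
    rw [← Matrix.mul_assoc Dᴴ D (P * Dᴴ), h1, Matrix.one_mul]
  rw [hmat, show (D * (ρ * P) * Dᴴ).trace = (ρ * P).trace from by
    rw [Matrix.trace_mul_cycle, h1, Matrix.one_mul]]

lemma LorMin_displaced (hodd : Odd d) (s : EuclideanSpace ℂ (ZMod d))
    (A : Finset (ZMod d × ZMod d)) (ρ : Matrix (ZMod d) (ZMod d) ℂ)
    (j : ZMod d × ZMod d) (ℓ : ℕ) :
    LorMin d s A (Dmat d j * ρ * (Dmat d j)ᴴ) ℓ = LorMin d s A ρ ℓ := by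
  rw [LorMin, LorMin]
  congr 1
  ext x
  constructor
  · rintro ⟨S, hc, rfl⟩
    have hinj : Function.Injective (fun i : ZMod d × ZMod d => i - j) :=
      fun a b h => by simpa using congrArg (· + j) h
    refine ⟨S.image (fun i => i - j), ?_, ?_⟩
    · rw [Finset.card_image_of_injective _ hinj, hc]
    · rw [Finset.sum_image (fun a _ b _ h => hinj h)]
      exact Finset.sum_congr rfl fun i _ => trQ_displaced hodd s A ρ j i
  · rintro ⟨S, hc, rfl⟩
    have hinj : Function.Injective (fun i : ZMod d × ZMod d => i + j) :=
      fun a b h => by simpa using congrArg (· - j) h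
    refine ⟨S.image (fun i => i + j), ?_, ?_⟩
    · rw [Finset.card_image_of_injective _ hinj, hc]
    · rw [Finset.sum_image (fun a _ b _ h => hinj h)]
      refine Finset.sum_congr rfl fun i _ => ?_
      rw [trQ_displaced hodd s A ρ j, add_sub_cancel_right]

end Helpers

/-- A quantum state `ρ` and its displacement `D(j)·ρ·D(j)†` have, for every
`1 ≤ ℓ ≤ d²`, the same minimum over `ℓ`-element subsets `S` of `∑_{i∈S} Tr(· Π(A+i))`;
hence they have the same Lorenz values and the same Gini index. -/
theorem displaced_state_same_lorenz_and_gini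
    (d : ℕ) [Fact d.Prime] (hodd : Odd d)
    (s : EuclideanSpace ℂ (ZMod d))
    (A : Finset (ZMod d × ZMod d))
    (ρ : Matrix (ZMod d) (ZMod d) ℂ) (hρ : ρ.PosSemidef) (hρtr : ρ.trace = 1)
    (j : ZMod d × ZMod d) :
    (∀ ℓ : ℕ, 1 ≤ ℓ → ℓ ≤ d ^ 2 →
      LorMin d s A (Dmat d j * ρ * (Dmat d j)ᴴ) ℓ = LorMin d s A ρ ℓ) ∧
    Gini d s A (Dmat d j * ρ * (Dmat d j)ᴴ) = Gini d s A ρ := by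
  have hL : ∀ ℓ : ℕ, LorMin d s A (Dmat d j * ρ * (Dmat d j)ᴴ) ℓ = LorMin d s A ρ ℓ :=
    fun ℓ => LorMin_displaced hodd s A ρ j ℓ
  refine ⟨fun ℓ _ _ => hL ℓ, ?_⟩
  rw [Gini, Gini]
  congr 1
  congr 1
  exact Finset.sum_congr rfl fun ℓ _ => by rw [hL ℓ]


end
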